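/- arXiv:1103.6232 — 8 statements merged into one kernel-verified Lean document; each statement's English description precedes it below -/
import Mathlib

section
/- Let f : [0, L] → [0, ∞) be a nonincreasing concave function with f(0) = 1, and let n ≥ 3 be an integer. Then ((n-1)/n) · (∫₀ᴸ f(x)^{n-2} dx)² ≥ ∫₀ᴸ x·f(x)^{n-2} dx. -/
open MeasureTheory intervalIntegral Set

/-!
Write `g = f ^ (n - 2)`, `T x = ∫ t in x..L, g t` and `I = T 0`. Integrating by parts,
`∫ x * g x = ∫ T`. The chord of `f` through `(0, 1)` and `(x, f x)` lies below `f` on `[0, x]` and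
above it on `[x, L]`; integrating its powers gives `T x ≤ I * f x ^ (n - 1)`. With `r = 1 / (n - 1)`
this yields `T = T ^ (1 - r) * T ^ r ≤ I ^ (1 - r) * T ^ r * g`, and since `T ^ r * g` is the
derivative of `-T ^ (r + 1) / (r + 1)`, we get `∫ T ≤ I ^ 2 / (1 + r) = (n - 1) / n * I ^ 2`.
-/

theorem AntitoneOn.pow_of_nonneg {s : Set ℝ} {f : ℝ → ℝ} (hf : AntitoneOn f s)
    (hnonneg : ∀ x ∈ s, 0 ≤ f x) (m : ℕ) : AntitoneOn (fun x => f x ^ m) s :=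
  fun _ hx _ hy hxy => pow_le_pow_left₀ (hnonneg _ hy) (hf hx hy hxy) m

section Chord

variable {s : Set ℝ} {f : ℝ → ℝ} {a x y : ℝ}

theorem ConcaveOn.slope_mul_add_le (hf : ConcaveOn ℝ s f) (ha : a ∈ s) (hx : x ∈ s) (hy : y ∈ s)
    (hax : a < x) (hay : a ≤ y) (hyx : y ≤ x) : slope f a x * (y - a) + f a ≤ f y := by
  rcases hay.eq_or_lt with rfl | hay
  · simp
  have hslope := hf.antitoneOn_slope_gt ha ⟨hy, hay⟩ ⟨hx, hax⟩ hyx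
  rw [slope_def_field f a y] at hslope
  have := mul_le_mul_of_nonneg_right hslope (sub_nonneg.2 hay.le)
  rw [div_mul_cancel₀ _ (sub_ne_zero.2 hay.ne')] at this
  linarith

theorem ConcaveOn.le_slope_mul_add (hf : ConcaveOn ℝ s f) (ha : a ∈ s) (hx : x ∈ s) (hy : y ∈ s)
    (hax : a < x) (hxy : x ≤ y) : f y ≤ slope f a x * (y - a) + f a := by
  have hay := hax.trans_le hxy
  have hslope := hf.antitoneOn_slope_gt ha ⟨hx, hax⟩ ⟨hy, hay⟩ hxy
  rw [slope_def_field f a y] at hslope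
  have := mul_le_mul_of_nonneg_right hslope (sub_nonneg.2 hay.le)
  rw [div_mul_cancel₀ _ (sub_ne_zero.2 hay.ne')] at this
  linarith

end Chord

theorem integral_mul_add_pow {β : ℝ} (hβ : β ≠ 0) (α u v : ℝ) (m : ℕ) :
    ∫ s in u..v, (β * s + α) ^ m =
      ((β * v + α) ^ (m + 1) - (β * u + α) ^ (m + 1)) / (β * (m + 1)) := by
  rw [integral_comp_mul_add (fun s => s ^ m) hβ, integral_pow, smul_eq_mul]
  field_simp

section Tail

variable {g : ℝ → ℝ} {a b : ℝ}

theorem continuousOn_integral_tail (hg : IntervalIntegrable g volume a b) :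
    ContinuousOn (fun x => ∫ t in x..b, g t) (uIcc a b) :=
  continuousOn_primitive_interval_left ((intervalIntegrable_iff' (by simp)).1 hg)

theorem hasDerivAt_integral_tail (hg : IntervalIntegrable g volume a b)
    (hgc : ContinuousOn g (Ioo a b)) {x : ℝ} (hx : x ∈ Ioo a b) :
    HasDerivAt (fun x => ∫ t in x..b, g t) (-g x) x :=
  integral_hasDerivAt_left (hg.mono_set (uIcc_subset_uIcc_right (Ioo_subset_Icc_self.trans
      Icc_subset_uIcc hx)))
    (hgc.stronglyMeasurableAtFilter isOpen_Ioo x hx) (hgc.continuousAt (isOpen_Ioo.mem_nhds hx))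

theorem integral_sub_mul_eq_integral_tail (hab : a ≤ b) (hg : IntervalIntegrable g volume a b)
    (hgc : ContinuousOn g (Ioo a b)) :
    ∫ x in a..b, (x - a) * g x = ∫ x in a..b, ∫ t in x..b, g t := by
  have hT := continuousOn_integral_tail hg
  have hint : IntervalIntegrable (fun x => (x - a) * g x) volume a b :=
    hg.continuousOn_mul (continuousOn_id.sub continuousOn_const)
  have hderiv : ∀ x ∈ Ioo a b, HasDerivWithinAt (fun x => (x - a) * ∫ t in x..b, g t)
      ((∫ t in x..b, g t) - (x - a) * g x) (Ioi x) x := fun x hx =>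
    ((((hasDerivAt_id' x).sub_const a).mul
      (hasDerivAt_integral_tail hg hgc hx)).congr_deriv (by ring)).hasDerivWithinAt
  have hFTC := integral_eq_sub_of_hasDeriv_right_of_le (f := fun x => (x - a) * ∫ t in x..b, g t)
    hab (((continuousOn_id.sub continuousOn_const).mul hT).mono Icc_subset_uIcc) hderiv
    (hT.intervalIntegrable.sub hint)
  rw [integral_sub hT.intervalIntegrable hint] at hFTC
  simp only [integral_same, sub_self, zero_mul, mul_zero] at hFTC
  linarith

theorem integral_tail_rpow_mul (hab : a ≤ b) (hg : IntervalIntegrable g volume a b)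
    (hgc : ContinuousOn g (Ioo a b)) {r : ℝ} (hr : 0 ≤ r) :
    ∫ x in a..b, (∫ t in x..b, g t) ^ r * g x = (∫ t in a..b, g t) ^ (r + 1) / (r + 1) := by
  have hT := continuousOn_integral_tail hg
  have hr1 : r + 1 ≠ 0 := by positivity
  have hderiv : ∀ x ∈ Ioo a b, HasDerivWithinAt
      (fun x => -(∫ t in x..b, g t) ^ (r + 1) / (r + 1))
      ((∫ t in x..b, g t) ^ r * g x) (Ioi x) x := fun x hx =>
    ((((hasDerivAt_integral_tail hg hgc hx).rpow_const (p := r + 1)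
      (Or.inr (by linarith))).neg.div_const (r + 1)).congr_deriv
        (by field_simp; ring_nf)).hasDerivWithinAt
  rw [integral_eq_sub_of_hasDeriv_right_of_le
    (f := fun x => -(∫ t in x..b, g t) ^ (r + 1) / (r + 1)) hab
    (((hT.rpow_const fun _ _ => Or.inr (by linarith)).neg.div_const _).mono Icc_subset_uIcc) hderiv
    (hg.continuousOn_mul (hT.rpow_const fun _ _ => Or.inr hr))]
  simp only [integral_same, Real.zero_rpow hr1]
  ring

end Tail

theorem le_rpow_mul_rpow_mul_pow_of_le_mul_pow_succ {T I c : ℝ} (hT : 0 ≤ T) (hI : 0 ≤ I)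
    (hc : 0 ≤ c) {k : ℕ} (h : T ≤ I * c ^ (k + 1)) :
    T ≤ I ^ (1 - ((k : ℝ) + 1)⁻¹) * (T ^ ((k : ℝ) + 1)⁻¹ * c ^ k) := by
  set r : ℝ := ((k : ℝ) + 1)⁻¹
  have hr : 0 ≤ 1 - r := sub_nonneg.2 (inv_le_one_of_one_le₀ (by simp))
  have hpow : (c ^ (k + 1)) ^ (1 - r) = c ^ k := by
    rw [← Real.rpow_natCast, ← Real.rpow_mul hc, ← Real.rpow_natCast]
    congr 1
    push_cast
    simp only [r]
    field_simp
    ring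
  calc T = T ^ (1 - r) * T ^ r := by
        rw [← Real.rpow_add' hT (by simp), sub_add_cancel, Real.rpow_one]
    _ ≤ (I * c ^ (k + 1)) ^ (1 - r) * T ^ r := by
        gcongr
    _ = I ^ (1 - r) * (T ^ r * c ^ k) := by
        rw [Real.mul_rpow hI (by positivity), hpow]
        ring

theorem le_add_mul_of_le_div_of_div_le {H T C P D : ℝ} (hD : D < 0) (hC0 : 0 ≤ C) (hC1 : C ≤ 1)
    (hP : 0 ≤ P) (hH : (C - 1) / D ≤ H) (hT : T ≤ (P - C) / D) : T ≤ (H + T) * C := by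
  rw [div_le_iff_of_neg hD] at hH
  rw [le_div_iff_of_neg hD] at hT
  nlinarith [mul_le_mul_of_nonneg_right hH hC0]

theorem integral_tail_pow_le_mul_pow_succ {L : ℝ} {f : ℝ → ℝ}
    (hconc : ConcaveOn ℝ (Icc 0 L) f) (hmono : AntitoneOn f (Icc 0 L))
    (hnonneg : ∀ x ∈ Icc 0 L, 0 ≤ f x) (hf0 : f 0 = 1) (m : ℕ) {x : ℝ} (hx : x ∈ Icc 0 L) :
    ∫ t in x..L, f t ^ m ≤ (∫ t in 0..L, f t ^ m) * f x ^ (m + 1) := by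
  have h0 : (0 : ℝ) ∈ Icc 0 L := ⟨le_rfl, hx.1.trans hx.2⟩
  have hL : L ∈ Icc 0 L := ⟨h0.2, le_rfl⟩
  have hint : ∀ u ∈ Icc 0 L, ∀ v ∈ Icc 0 L, IntervalIntegrable (fun t => f t ^ m) volume u v :=
    fun u hu v hv =>
      ((hmono.pow_of_nonneg hnonneg m).mono (uIcc_subset_Icc hu hv)).intervalIntegrable
  rw [← integral_add_adjacent_intervals (hint 0 h0 x hx) (hint x hx L hL)]
  have hfx_le : f x ≤ 1 := hf0 ▸ hmono h0 hx hx.1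
  rcases hfx_le.eq_or_lt with hfx | hfx
  · rw [hfx, one_pow, mul_one, le_add_iff_nonneg_left]
    exact integral_nonneg hx.1 fun t ht => pow_nonneg (hnonneg t ⟨ht.1, ht.2.trans hx.2⟩) m
  have hx0 : 0 < x := hx.1.lt_of_ne (by rintro rfl; exact hfx.ne hf0)
  -- `s ↦ σ * s + 1` is the chord of `f` through `(0, 1)` and `(x, f x)`.
  set σ := slope f 0 x with hσ
  have hσx : σ * x + 1 = f x := by
    rw [hσ, slope_def_field, hf0, sub_zero, div_mul_cancel₀ _ hx0.ne']; ring
  have hσneg : σ < 0 := by nlinarith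
  have hchord_nonneg : ∀ s ≤ x, 0 ≤ σ * s + 1 := fun s hs => by
    nlinarith [hnonneg x hx]
  have hchord_int : ∀ u v, IntervalIntegrable (fun s => (σ * s + 1) ^ m) volume u v :=
    fun u v => (by fun_prop : Continuous fun s => (σ * s + 1) ^ m).intervalIntegrable u v
  have hlower : ∀ s ∈ Icc 0 x, σ * s + 1 ≤ f s := fun s hs => by
    simpa [hf0] using hconc.slope_mul_add_le h0 hx ⟨hs.1, hs.2.trans hx.2⟩ hx0 hs.1 hs.2
  have hhead : (f x ^ (m + 1) - 1) / (σ * (m + 1)) ≤ ∫ t in 0..x, f t ^ m := by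
    have := integral_mono_on hx.1 (hchord_int 0 x) (hint 0 h0 x hx) fun s hs =>
      pow_le_pow_left₀ (hchord_nonneg s hs.2) (hlower s hs) m
    rwa [integral_mul_add_pow hσneg.ne, hσx, mul_zero, zero_add, one_pow] at this
  have hupper : ∀ y ∈ Icc x L, f y ≤ σ * y + 1 := fun y hy => by
    simpa [hf0] using hconc.le_slope_mul_add h0 hx ⟨hx.1.trans hy.1, hy.2⟩ hx0 hy.1
  have htail : ∫ t in x..L, f t ^ m ≤ ((σ * L + 1) ^ (m + 1) - f x ^ (m + 1)) / (σ * (m + 1)) := by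
    have := integral_mono_on hx.2 (hint x hx L hL) (hchord_int x L) fun y hy =>
      pow_le_pow_left₀ (hnonneg y ⟨hx.1.trans hy.1, hy.2⟩) (hupper y hy) m
    rwa [integral_mul_add_pow hσneg.ne, hσx] at this
  exact le_add_mul_of_le_div_of_div_le (mul_neg_of_neg_of_pos hσneg (by positivity))
    (pow_nonneg (hnonneg x hx) _) (pow_le_one₀ (hnonneg x hx) hfx_le)
    (pow_nonneg ((hnonneg L hL).trans (hupper L ⟨hx.2, le_rfl⟩)) _) hhead htail

theorem lemma1 (L : ℝ) (hL : 0 < L) (f : ℝ → ℝ)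
    (hconc : ConcaveOn ℝ (Set.Icc 0 L) f)
    (hmono : AntitoneOn f (Set.Icc 0 L))
    (hnonneg : ∀ x ∈ Set.Icc 0 L, 0 ≤ f x)
    (hf0 : f 0 = 1) (n : ℕ) (hn : 3 ≤ n) :
    ((n : ℝ) - 1) / n * (∫ x in (0:ℝ)..L, f x ^ (n - 2)) ^ 2 ≥
      ∫ x in (0:ℝ)..L, x * f x ^ (n - 2) := by
  set m := n - 2
  have hnm : (n : ℝ) = m + 2 := by
    rw [Nat.cast_sub (by omega : 2 ≤ n)]
    ring
  have hint : IntervalIntegrable (fun t => f t ^ m) volume 0 L :=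
    ((hmono.pow_of_nonneg hnonneg m).mono (uIcc_of_le hL.le).subset).intervalIntegrable
  have hcont : ContinuousOn (fun t => f t ^ m) (Ioo 0 L) :=
    ((hconc.subset Ioo_subset_Icc_self (convex_Ioo 0 L)).continuousOn isOpen_Ioo).pow m
  have htail_nonneg : ∀ x ∈ Icc 0 L, 0 ≤ ∫ t in x..L, f t ^ m := fun x hx =>
    integral_nonneg hx.2 fun t ht => pow_nonneg (hnonneg t ⟨hx.1.trans ht.1, ht.2⟩) m
  set I := ∫ t in 0..L, f t ^ m
  have hI : 0 ≤ I := htail_nonneg 0 ⟨le_rfl, hL.le⟩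
  set r : ℝ := ((m : ℝ) + 1)⁻¹
  calc ∫ x in 0..L, x * f x ^ m = ∫ x in 0..L, ∫ t in x..L, f t ^ m := by
        simpa only [sub_zero] using integral_sub_mul_eq_integral_tail hL.le hint hcont
    _ ≤ ∫ x in 0..L, I ^ (1 - r) * ((∫ t in x..L, f t ^ m) ^ r * f x ^ m) :=
        integral_mono_on hL.le (continuousOn_integral_tail hint).intervalIntegrable
          ((hint.continuousOn_mul ((continuousOn_integral_tail hint).rpow_const
            fun _ _ => Or.inr (by positivity))).const_mul _) fun x hx =>
          le_rpow_mul_rpow_mul_pow_of_le_mul_pow_succ (htail_nonneg x hx) hI (hnonneg x hx)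
            (integral_tail_pow_le_mul_pow_succ hconc hmono hnonneg hf0 m hx)
    _ = I ^ (1 - r) * (I ^ (r + 1) / (r + 1)) := by
        rw [intervalIntegral.integral_const_mul,
          integral_tail_rpow_mul hL.le hint hcont (by positivity)]
    _ = ((n : ℝ) - 1) / n * I ^ 2 := by
        have h2 : 1 - r + (r + 1) = 2 := by ring
        rw [mul_div_assoc', ← Real.rpow_add' hI (by rw [h2]; norm_num), h2, Real.rpow_two, hnm]
        simp only [r]
        field_simp
        ring
end

section
/- Let g : [0,1] → ℝ be given by g(x) = 1 - αx for some α ∈ [0,1], and let n ≥ 3. Then ((n-1)/n) · (∫₀¹ g(x)^{n-2} dx)² ≥ ∫₀¹ x·g(x)^{n-2} dx. -/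
open MeasureTheory intervalIntegral

/-!
For `α ≠ 0` both integrals are explicit in `P = β ^ (n - 1)`, `β = 1 - α`, since
`x (1 - α x) ^ k = ((1 - α x) ^ k - (1 - α x) ^ (k + 1)) / α`. Over the common denominator
`(n - 1) n α ^ 2` the inequality becomes `P (P - (1 + (n - 1) (β - 1))) ≥ 0`, which is
Bernoulli's inequality.
-/

theorem integral_one_sub_mul_pow {α : ℝ} (hα : α ≠ 0) (k : ℕ) :
    ∫ x in (0:ℝ)..1, (1 - α * x) ^ k = (1 - (1 - α) ^ (k + 1)) / ((k + 1) * α) := by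
  rw [integral_comp_sub_mul (fun y => y ^ k) hα, integral_pow, smul_eq_mul]
  field_simp
  ring

theorem integral_mul_one_sub_mul_pow {α : ℝ} (hα : α ≠ 0) (k : ℕ) :
    ∫ x in (0:ℝ)..1, x * (1 - α * x) ^ k =
      ((∫ x in (0:ℝ)..1, (1 - α * x) ^ k) - ∫ x in (0:ℝ)..1, (1 - α * x) ^ (k + 1)) / α := by
  rw [← intervalIntegral.integral_sub ((by fun_prop : Continuous _).intervalIntegrable _ _)
    ((by fun_prop : Continuous _).intervalIntegrable _ _), ← intervalIntegral.integral_div]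
  congr 1 with x
  field_simp
  ring

theorem le_one_sub_pow_succ_sq {β : ℝ} (hβ : 0 ≤ β) (k : ℕ) :
    (k + 2) * (1 - β ^ (k + 1)) - (k + 1) * (1 - β ^ (k + 2)) ≤ (1 - β ^ (k + 1)) ^ 2 := by
  have bernoulli := one_add_mul_sub_le_pow (by linarith : -1 ≤ β) (k + 1)
  push_cast at bernoulli
  have factor : (1 - β ^ (k + 1)) ^ 2 - ((k + 2) * (1 - β ^ (k + 1)) - (k + 1) * (1 - β ^ (k + 2)))
      = β ^ (k + 1) * (β ^ (k + 1) - (1 + (k + 1) * (β - 1))) := by ring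
  rw [← sub_nonneg, factor]
  exact mul_nonneg (pow_nonneg hβ _) (sub_nonneg.2 bernoulli)

theorem affine_case_general (α : ℝ) (hα1 : α ≤ 1) (n : ℕ) (hn : 3 ≤ n) :
    ((n : ℝ) - 1) / n * (∫ x in (0:ℝ)..1, (1 - α * x) ^ (n - 2)) ^ 2 ≥
      ∫ x in (0:ℝ)..1, x * (1 - α * x) ^ (n - 2) := by
  obtain ⟨k, rfl⟩ : ∃ k, n = k + 2 := ⟨n - 2, by omega⟩
  rw [Nat.add_sub_cancel]
  push_cast
  rcases eq_or_ne α 0 with rfl | hα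
  · simp only [zero_mul, sub_zero, one_pow, mul_one, integral_one, integral_id]
    rw [ge_iff_le, le_div_iff₀ (by positivity)]
    nlinarith
  · rw [integral_mul_one_sub_mul_pow hα, integral_one_sub_mul_pow hα,
      integral_one_sub_mul_pow hα]
    push_cast
    have key := le_one_sub_pow_succ_sq (by linarith : 0 ≤ 1 - α) k
    set β := 1 - α
    rw [ge_iff_le, ← sub_nonneg]
    have common_denom : ((k:ℝ) + 2 - 1) / (k + 2) * ((1 - β ^ (k + 1)) / ((k + 1) * α)) ^ 2 -
        ((1 - β ^ (k + 1)) / ((k + 1) * α) - (1 - β ^ (k + 1 + 1)) / ((k + 1 + 1) * α)) / α =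
        ((1 - β ^ (k + 1)) ^ 2 - ((k + 2) * (1 - β ^ (k + 1)) - (k + 1) * (1 - β ^ (k + 2)))) /
          ((k + 1) * (k + 2) * α ^ 2) := by
      field_simp
      ring
    rw [common_denom]
    exact div_nonneg (sub_nonneg.2 key) (by positivity)

theorem affine_case (α : ℝ) (hα0 : 0 ≤ α) (hα1 : α ≤ 1) (n : ℕ) (hn : 3 ≤ n) :
    ((n : ℝ) - 1) / n * (∫ x in (0:ℝ)..1, (1 - α * x) ^ (n - 2)) ^ 2 ≥
      ∫ x in (0:ℝ)..1, x * (1 - α * x) ^ (n - 2) :=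
  affine_case_general α hα1 n hn
end

section
/- For every integer n ≥ 3 and every real α ∈ [0,1], the inequality (1/(α²n(n-1)))·(1 - (1-α)^{n-1})² ≥ (1/α²)·((1/(n-1))·(1 - (1-α)^{n-1}) - (1/n)·(1 - (1-α)^n)) holds (for α = 0 interpreted by continuity, both sides vanish appropriately). -/
/-!
Write `m = n - 1` and `x = (1 - α) ^ m`. Clearing denominators, the left side minus the right
side equals `x * (x - (1 - m * α)) / (α ^ 2 * n * m)`, and both factors of the numerator are
nonnegative: `x ≥ 0` because `α ≤ 1`, and `x ≥ 1 - m * α` is Bernoulli's inequality.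
-/

lemma gap_eq_mul_sub_div {K : Type*} [Field K] (a x m : K) (ha : a ≠ 0) (hm : m ≠ 0)
    (hm1 : m + 1 ≠ 0) :
    1 / (a ^ 2 * (m + 1) * m) * (1 - x) ^ 2 -
        1 / a ^ 2 * (1 / m * (1 - x) - 1 / (m + 1) * (1 - (1 - a) * x)) =
      x * (x - (1 - m * a)) / (a ^ 2 * (m + 1) * m) := by
  field_simp
  ring

theorem explicit_inequality (n : ℕ) (hn : 3 ≤ n) (α : ℝ) (hα0 : 0 < α) (hα1 : α ≤ 1) :
    1 / (α ^ 2 * n * ((n : ℝ) - 1)) * (1 - (1 - α) ^ (n - 1)) ^ 2 ≥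
      1 / α ^ 2 *
        (1 / ((n : ℝ) - 1) * (1 - (1 - α) ^ (n - 1)) - 1 / (n : ℝ) * (1 - (1 - α) ^ n)) := by
  obtain ⟨m, rfl⟩ : ∃ m, n = m + 1 := ⟨n - 1, by omega⟩
  have hm : (0 : ℝ) < m := by exact_mod_cast (by omega : 0 < m)
  have hx : 0 ≤ (1 - α) ^ m := pow_nonneg (by linarith) m
  have hbernoulli : 1 - m * α ≤ (1 - α) ^ m := by
    have := one_add_mul_sub_le_pow (a := 1 - α) (by linarith) m
    linarith
  rw [ge_iff_le, ← sub_nonneg, Nat.add_sub_cancel, pow_succ' (1 - α) m, Nat.cast_succ,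
    add_sub_cancel_right, gap_eq_mul_sub_div α _ _ hα0.ne' hm.ne' (by positivity)]
  have hnum := mul_nonneg hx (sub_nonneg.mpr hbernoulli)
  positivity
end

section
/- Let f, g : [0,1] → [0, ∞) with f concave nonincreasing, g affine nonincreasing, f(0) = g(0) = 1, and suppose ∫₀¹ f(x)^{m} dx = ∫₀¹ g(x)^{m} dx for some integer m ≥ 1. Then ∫₀¹ x·f(x)^{m} dx ≤ ∫₀¹ x·g(x)^{m} dx. -/
open MeasureTheory intervalIntegral Set

/-!
Since `f - g` is concave and vanishes at `0`, the set where `g ≤ f` is an initial segment of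
`[0, 1]`: there is a `c` with `f ≥ g` before `c` and `f ≤ g` after it, and the same holds for
`f ^ m` and `g ^ m`. Hence `(x - c) (f ^ m - g ^ m) ≤ 0` on `[0, 1]`; integrating and using
`∫ f ^ m = ∫ g ^ m` gives `∫ x f ^ m ≤ ∫ x g ^ m`.
-/

theorem ConcaveOn.exists_mul_sub_nonpos {h : ℝ → ℝ} {a b : ℝ} (hh : ConcaveOn ℝ (Icc a b) h)
    (hab : a ≤ b) (ha : 0 ≤ h a) : ∃ c, ∀ x ∈ Icc a b, (x - c) * h x ≤ 0 := by
  set T := {x ∈ Icc a b | 0 ≤ h x}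
  have haT : a ∈ T := ⟨left_mem_Icc.2 hab, ha⟩
  have hT : T.OrdConnected := convex_iff_ordConnected.1 (hh.convex_ge 0)
  have hTbdd : BddAbove T := ⟨b, fun x hx => hx.1.2⟩
  refine ⟨sSup T, fun x hx => ?_⟩
  rcases lt_or_ge x (sSup T) with hlt | hge
  · obtain ⟨y, hyT, hxy⟩ := exists_lt_of_lt_csSup ⟨a, haT⟩ hlt
    have hxT : x ∈ T := hT.out haT hyT ⟨hx.1, hxy.le⟩
    exact mul_nonpos_of_nonpos_of_nonneg (by linarith) hxT.2
  · rcases hge.eq_or_lt with heq | hgt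
    · simp [heq]
    · have hxT : x ∉ T := fun hxT => (le_csSup hTbdd hxT).not_gt hgt
      have : h x < 0 := not_le.1 fun h0 => hxT ⟨hx, h0⟩
      exact mul_nonpos_of_nonneg_of_nonpos (by linarith) this.le

theorem mul_sub_pow_nonpos {t u v : ℝ} (hu : 0 ≤ u) (hv : 0 ≤ v) (h : t * (u - v) ≤ 0) (m : ℕ) :
    t * (u ^ m - v ^ m) ≤ 0 := by
  rcases lt_trichotomy t 0 with ht | rfl | ht
  · have : v ≤ u := by nlinarith
    exact mul_nonpos_of_nonpos_of_nonneg ht.le (sub_nonneg.2 (pow_le_pow_left₀ hv this m))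
  · simp
  · have : u ≤ v := by nlinarith
    exact mul_nonpos_of_nonneg_of_nonpos ht.le (sub_nonpos.2 (pow_le_pow_left₀ hu this m))

theorem integral_id_mul_le_of_mul_sub_nonpos {φ : ℝ → ℝ} {a b c : ℝ} (hab : a ≤ b)
    (hφ : IntervalIntegrable φ volume a b) (hsign : ∀ x ∈ Icc a b, (x - c) * φ x ≤ 0) :
    ∫ x in a..b, x * φ x ≤ c * ∫ x in a..b, φ x := by
  have hsplit : ∫ x in a..b, (x - c) * φ x = (∫ x in a..b, x * φ x) - c * ∫ x in a..b, φ x := by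
    rw [← intervalIntegral.integral_const_mul, ← intervalIntegral.integral_sub
      (hφ.continuousOn_mul (g := fun x => x) continuousOn_id) (hφ.const_mul c)]
    congr 1 with x
    ring
  have hnonpos : ∫ x in a..b, (x - c) * φ x ≤ 0 := by
    simpa using integral_mono_on hab (hφ.continuousOn_mul (continuousOn_id.sub continuousOn_const))
      intervalIntegrable_const hsign
  linarith

theorem compare_with_affine_general (f : ℝ → ℝ)
    (hconc : ConcaveOn ℝ (Set.Icc (0:ℝ) 1) f)
    (hmono : AntitoneOn f (Set.Icc (0:ℝ) 1))
    (hnonneg : ∀ x ∈ Set.Icc (0:ℝ) 1, 0 ≤ f x)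
    (hf0 : f 0 = 1)
    (α : ℝ) (hα1 : α ≤ 1)
    (m : ℕ)
    (heq : ∫ x in (0:ℝ)..1, f x ^ m = ∫ x in (0:ℝ)..1, (1 - α * x) ^ m) :
    ∫ x in (0:ℝ)..1, x * f x ^ m ≤ ∫ x in (0:ℝ)..1, x * (1 - α * x) ^ m := by
  have hg_nonneg : ∀ x ∈ Icc (0:ℝ) 1, 0 ≤ 1 - α * x := fun x hx => by nlinarith [hx.1, hx.2]
  have hg_convex : ConvexOn ℝ (Icc (0:ℝ) 1) (fun x => 1 - α * x) :=
    (convexOn_const 1 (convex_Icc 0 1)).sub ((LinearMap.mul ℝ ℝ α).concaveOn (convex_Icc 0 1))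
  obtain ⟨c, hc⟩ := (hconc.sub hg_convex).exists_mul_sub_nonpos zero_le_one (by simp [hf0])
  have hIf : IntervalIntegrable (fun x => f x ^ m) volume 0 1 := by
    refine AntitoneOn.intervalIntegrable ?_
    rw [uIcc_of_le zero_le_one]
    exact fun x hx y hy hxy => pow_le_pow_left₀ (hnonneg y hy) (hmono hx hy hxy) m
  have hIg : IntervalIntegrable (fun x => (1 - α * x) ^ m) volume 0 1 :=
    (by fun_prop : Continuous fun x : ℝ => (1 - α * x) ^ m).intervalIntegrable 0 1
  have key := integral_id_mul_le_of_mul_sub_nonpos zero_le_one (hIf.sub hIg)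
    fun x hx => mul_sub_pow_nonpos (hnonneg x hx) (hg_nonneg x hx) (hc x hx) m
  simp only [mul_sub] at key
  rw [integral_sub hIf hIg, heq, sub_self, mul_zero,
    integral_sub (hIf.continuousOn_mul (g := fun x => x) continuousOn_id)
      (hIg.continuousOn_mul (g := fun x => x) continuousOn_id)] at key
  linarith

theorem compare_with_affine (f : ℝ → ℝ)
    (hconc : ConcaveOn ℝ (Set.Icc (0:ℝ) 1) f)
    (hmono : AntitoneOn f (Set.Icc (0:ℝ) 1))
    (hnonneg : ∀ x ∈ Set.Icc (0:ℝ) 1, 0 ≤ f x)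
    (hf0 : f 0 = 1)
    (α : ℝ) (hα0 : 0 ≤ α) (hα1 : α ≤ 1)
    (m : ℕ) (hm : 1 ≤ m)
    (heq : ∫ x in (0:ℝ)..1, f x ^ m = ∫ x in (0:ℝ)..1, (1 - α * x) ^ m) :
    ∫ x in (0:ℝ)..1, x * f x ^ m ≤ ∫ x in (0:ℝ)..1, x * (1 - α * x) ^ m :=
  compare_with_affine_general f hconc hmono hnonneg hf0 α hα1 m heq
end

section
/- If f, g : [0,1] → ℝ are such that there exists c ∈ [0,1] with f ≥ g on [0,c] and f ≤ g on [c,1], and ∫₀¹ f = ∫₀¹ g, then ∫₀¹ x·f(x) dx ≤ ∫₀¹ x·g(x) dx. -/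
/-!
Since `f - g` changes sign from `≥ 0` to `≤ 0` at `c` while `x - c` changes sign from `≤ 0` to `≥ 0`
there, the product `(x - c) (f x - g x)` is nonpositive everywhere. Its integral is
`∫ x f - ∫ x g - c (∫ f - ∫ g)`, and the last term vanishes because the integrals of `f` and `g`
agree. Only the monotonicity of the weight `x` is used, so any monotone continuous weight works.
-/

open MeasureTheory intervalIntegral Set

section CrossingWeight

variable {w h : ℝ → ℝ} {a b c : ℝ}

theorem integral_weight_sub_mul_nonpos_of_crossing (hab : a ≤ b) (hw : Monotone w)
    (hw_cont : ContinuousOn w (uIcc a b)) (hh : IntervalIntegrable h volume a b)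
    (hpos : ∀ x ∈ Icc a c, 0 ≤ h x) (hneg : ∀ x ∈ Icc c b, h x ≤ 0) :
    ∫ x in a..b, (w x - w c) * h x ≤ 0 := by
  have hint : IntervalIntegrable (fun x => (w x - w c) * h x) volume a b :=
    hh.continuousOn_mul (hw_cont.sub continuousOn_const)
  refine (integral_mono_on hab hint intervalIntegrable_const fun x hx => ?_).trans_eq
    integral_zero
  rcases le_total x c with hxc | hcx
  · exact mul_nonpos_of_nonpos_of_nonneg (sub_nonpos.2 (hw hxc)) (hpos x ⟨hx.1, hxc⟩)
  · exact mul_nonpos_of_nonneg_of_nonpos (sub_nonneg.2 (hw hcx)) (hneg x ⟨hcx, hx.2⟩)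

theorem integral_weight_mul_le_of_crossing {f g : ℝ → ℝ} (hab : a ≤ b) (hw : Monotone w)
    (hw_cont : ContinuousOn w (uIcc a b)) (hf : IntervalIntegrable f volume a b)
    (hg : IntervalIntegrable g volume a b) (h1 : ∀ x ∈ Icc a c, g x ≤ f x)
    (h2 : ∀ x ∈ Icc c b, f x ≤ g x) (heq : ∫ x in a..b, f x = ∫ x in a..b, g x) :
    ∫ x in a..b, w x * f x ≤ ∫ x in a..b, w x * g x := by
  have hwf := hf.continuousOn_mul hw_cont
  have hwg := hg.continuousOn_mul hw_cont
  have hsplit : ∫ x in a..b, (w x - w c) * (f x - g x)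
      = (∫ x in a..b, w x * f x) - (∫ x in a..b, w x * g x)
        - w c * ((∫ x in a..b, f x) - ∫ x in a..b, g x) := by
    have hpt : ∀ x, (w x - w c) * (f x - g x) = w x * f x - w x * g x - w c * (f x - g x) :=
      fun x => by ring
    simp_rw [hpt]
    rw [integral_sub (hwf.sub hwg) ((hf.sub hg).const_mul _), integral_sub hwf hwg,
      intervalIntegral.integral_const_mul, integral_sub hf hg]
  have hnonpos := integral_weight_sub_mul_nonpos_of_crossing hab hw hw_cont (hf.sub hg)
    (fun x hx => sub_nonneg.2 (h1 x hx)) (fun x hx => sub_nonpos.2 (h2 x hx))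
  rw [hsplit, heq, sub_self, mul_zero, sub_zero, sub_nonpos] at hnonpos
  exact hnonpos

end CrossingWeight

theorem crossing_comparison_general (f g : ℝ → ℝ)
    (hf : IntegrableOn f (Set.Icc (0:ℝ) 1))
    (hg : IntegrableOn g (Set.Icc (0:ℝ) 1))
    (c : ℝ)
    (h1 : ∀ x ∈ Set.Icc 0 c, g x ≤ f x)
    (h2 : ∀ x ∈ Set.Icc c 1, f x ≤ g x)
    (heq : ∫ x in (0:ℝ)..1, f x = ∫ x in (0:ℝ)..1, g x) :
    ∫ x in (0:ℝ)..1, x * f x ≤ ∫ x in (0:ℝ)..1, x * g x :=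
  integral_weight_mul_le_of_crossing zero_le_one monotone_id continuousOn_id
    ((intervalIntegrable_iff_integrableOn_Icc_of_le zero_le_one).2 hf)
    ((intervalIntegrable_iff_integrableOn_Icc_of_le zero_le_one).2 hg) h1 h2 heq

theorem crossing_comparison (f g : ℝ → ℝ)
    (hf : IntegrableOn f (Set.Icc (0:ℝ) 1))
    (hg : IntegrableOn g (Set.Icc (0:ℝ) 1))
    (c : ℝ) (hc0 : 0 ≤ c) (hc1 : c ≤ 1)
    (h1 : ∀ x ∈ Set.Icc 0 c, g x ≤ f x)
    (h2 : ∀ x ∈ Set.Icc c 1, f x ≤ g x)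
    (heq : ∫ x in (0:ℝ)..1, f x = ∫ x in (0:ℝ)..1, g x) :
    ∫ x in (0:ℝ)..1, x * f x ≤ ∫ x in (0:ℝ)..1, x * g x :=
  crossing_comparison_general f g hf hg c h1 h2 heq
end

section
/- For positive parameters L and a with L < a < 2L, let K ⊂ ℝⁿ be the union of the cube [−L, L]ⁿ with, for each coordinate i and sign ε, the convex hull of the point ε·a·e_i and the face {x : x_i = εL, |x_k| ≤ L for k ≠ i}. Then the projection K_i of K onto the first i coordinates has volume |K_i| = 2ⁱ·L^{i-1}·a, so the sequence (|K_i|)_{i=1}^n is geometric. -/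
open MeasureTheory

/-- Orthogonal projection of a set in `ℝⁿ` onto the span of the first `i`
standard basis vectors, identified with `ℝⁱ`. -/
def proj {n : ℕ} (i : ℕ) (h : i ≤ n) (K : Set (Fin n → ℝ)) : Set (Fin i → ℝ) :=
  (fun x (j : Fin i) => x (Fin.castLE h j)) '' K

/-!
The cap over the face `x_j = ε L` is the set of points at height `s = ε x_j ∈ [L, a]` whose
other coordinates lie in the cube of half-width `L (a - s) / (a - L)`. Projecting onto the first `i`
coordinates gives the `i`-dimensional body of the same shape, since a cap over a forgotten face
projects into the cube. The caps meet the cube and each other only in null sets, and each is a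
pyramid of height `a - L` over a face of area `(2L)^{i-1}`, so
`|K_i| = (2L)^i + 2i · (2L)^{i-1} (a - L) / i = 2^i L^{i-1} a`.
-/

open Function

variable {ι : Type*} {L a ε : ℝ}

def capSet (L a ε : ℝ) (j : ι) : Set (ι → ℝ) :=
  {x | ε * x j ∈ Set.Icc L a ∧ ∀ k ≠ j, |x k| ≤ L * (a - ε * x j) / (a - L)}

def cappedCube (L a : ℝ) : Set (ι → ℝ) :=
  Set.Icc (fun _ => -L) (fun _ => L) ∪ ⋃ j, (capSet L a (-1) j ∪ capSet L a 1 j)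

theorem mem_cube_iff {x : ι → ℝ} :
    x ∈ Set.Icc (fun _ => -L) (fun _ => L) ↔ ∀ k, |x k| ≤ L := by
  simp only [Set.mem_Icc, Pi.le_def, abs_le, forall_and]

theorem convex_face (j : ι) (c L : ℝ) :
    Convex ℝ {x : ι → ℝ | x j = c ∧ ∀ k ≠ j, |x k| ≤ L} := by
  simp only [Set.ofPred_and, Set.ofPred_forall, abs_le]
  exact ((convex_singleton c).linear_preimage (LinearMap.proj (R := ℝ) j)).inter
    (convex_iInter₂ fun k _ =>
      (convex_Icc (-L) L).linear_preimage (LinearMap.proj (R := ℝ) k))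

theorem segment_subset_capSet [DecidableEq ι] (hLa : L < a) (hε : |ε| = 1) {j : ι}
    {y : ι → ℝ} (hy : y j = ε * L ∧ ∀ k ≠ j, |y k| ≤ L) :
    segment ℝ (Pi.single j (ε * a)) y ⊆ capSet L a ε j := by
  rintro _ ⟨u, v, hu, hv, huv, rfl⟩
  have hεε : ε * ε = 1 := by rw [← abs_mul_abs_self, hε, one_mul]
  have hj : ε * (u • (Pi.single j (ε * a) : ι → ℝ) + v • y) j = u * a + v * L := by
    simp only [Pi.add_apply, Pi.smul_apply, smul_eq_mul, Pi.single_eq_same, hy.1]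
    linear_combination (u * a + v * L) * hεε
  have haL : 0 ≤ a - L := (sub_pos.2 hLa).le
  have hlow : u * a + v * L = L + u * (a - L) := by linear_combination L * huv
  have hhigh : u * a + v * L = a - v * (a - L) := by linear_combination a * huv
  refine ⟨by rw [hj]; constructor <;> linarith [mul_nonneg hu haL, mul_nonneg hv haL],
    fun k hk => ?_⟩
  have hxk : (u • (Pi.single j (ε * a) : ι → ℝ) + v • y) k = v * y k := by
    simp [Pi.single_eq_of_ne hk]
  rw [hxk, hj, abs_mul, abs_of_nonneg hv, hhigh, sub_sub_cancel]
  calc v * |y k| ≤ v * L := mul_le_mul_of_nonneg_left (hy.2 k hk) hv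
    _ = L * (v * (a - L)) / (a - L) := by field_simp [(sub_pos.2 hLa).ne']

theorem exists_mem_segment_of_mem_capSet [DecidableEq ι] (hL : 0 ≤ L) (hLa : L < a)
    (hε : |ε| = 1) {j : ι} {x : ι → ℝ} (hx : x ∈ capSet L a ε j) :
    ∃ y, (y j = ε * L ∧ ∀ k ≠ j, |y k| ≤ L) ∧
      x ∈ segment ℝ (Pi.single j (ε * a)) y := by
  have hεε : ε * ε = 1 := by rw [← abs_mul_abs_self, hε, one_mul]
  have haL : a - L ≠ 0 := (sub_pos.2 hLa).ne'
  obtain ⟨⟨hLx, hxa⟩, hxk⟩ := hx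
  set u := (ε * x j - L) / (a - L) with hu
  set v := (a - ε * x j) / (a - L) with hv
  have hxk : ∀ k ≠ j, |x k| ≤ L * v := fun k hk => (hxk k hk).trans_eq (mul_div_assoc ..)
  have hv0 : 0 ≤ v := div_nonneg (by linarith) (sub_pos.2 hLa).le
  have hsum : u * a + v * L = ε * x j := by rw [hu, hv]; field_simp; ring
  -- If `v = 0` then `x` is the apex, and the junk value `x k / 0 = 0` still gives a face point.
  refine ⟨update (fun k => x k / v) j (ε * L), ⟨update_self .., fun k hk => ?_⟩,
    u, v, div_nonneg (by linarith) (sub_pos.2 hLa).le, hv0,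
    by rw [hu, hv]; field_simp; ring, ?_⟩
  · rw [update_of_ne hk, abs_div, abs_of_nonneg hv0]
    exact div_le_of_le_mul₀ hv0 hL (hxk k hk)
  · ext k
    rcases eq_or_ne k j with rfl | hk
    · simp only [Pi.add_apply, Pi.smul_apply, smul_eq_mul, Pi.single_eq_same, update_self]
      linear_combination ε * hsum + x k * hεε
    · simp only [Pi.add_apply, Pi.smul_apply, smul_eq_mul, Pi.single_eq_of_ne hk,
        update_of_ne hk, mul_zero, zero_add]
      refine mul_div_cancel_of_imp' fun h => abs_nonpos_iff.1 ?_
      simpa [h] using hxk k hk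

theorem convexHull_eq_capSet [DecidableEq ι] (hL : 0 ≤ L) (hLa : L < a) (hε : |ε| = 1)
    (j : ι) : convexHull ℝ ({Pi.single j (ε * a)} ∪
      {x : ι → ℝ | x j = ε * L ∧ ∀ k ≠ j, |x k| ≤ L}) = capSet L a ε j := by
  have hne : {x : ι → ℝ | x j = ε * L ∧ ∀ k ≠ j, |x k| ≤ L}.Nonempty :=
    ⟨Pi.single j (ε * L), by simp, fun k hk => by simp [Pi.single_eq_of_ne hk, hL]⟩
  rw [Set.singleton_union, convexHull_insert hne, (convex_face j _ L).convexHull_eq]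
  ext x
  rw [mem_convexJoin]
  constructor
  · rintro ⟨_, rfl, y, hy, hxy⟩
    exact segment_subset_capSet hLa hε hy hxy
  · intro hx
    obtain ⟨y, hy, hxy⟩ := exists_mem_segment_of_mem_capSet hL hLa hε hx
    exact ⟨_, rfl, y, hy, hxy⟩

theorem abs_le_of_mem_capSet (hL : 0 ≤ L) (hLa : L < a) {j k : ι} {x : ι → ℝ}
    (hx : x ∈ capSet L a ε j) (hk : k ≠ j) : |x k| ≤ L := by
  refine (hx.2 k hk).trans (div_le_of_le_mul₀ (sub_pos.2 hLa).le hL ?_)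
  nlinarith [hx.1.1]

theorem comp_mem_capSet {κ : Type*} {f : κ → ι} (hf : Injective f) {j : κ} {x : ι → ℝ}
    (hx : x ∈ capSet L a ε (f j)) : x ∘ f ∈ capSet L a ε j :=
  ⟨hx.1, fun k hk => hx.2 (f k) (hf.ne hk)⟩

theorem extend_mem_capSet {κ : Type*} {f : κ → ι} (hf : Injective f) (hL : 0 ≤ L)
    (hLa : L < a) {j : κ} {y : κ → ℝ} (hy : y ∈ capSet L a ε j) :
    extend f y 0 ∈ capSet L a ε (f j) := by
  refine ⟨by rw [hf.extend_apply]; exact hy.1, fun k hk => ?_⟩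
  rw [hf.extend_apply]
  by_cases hkf : ∃ l, f l = k
  · obtain ⟨l, rfl⟩ := hkf
    rw [hf.extend_apply]
    exact hy.2 l (ne_of_apply_ne f hk)
  · rw [extend_apply' _ _ _ hkf, Pi.zero_apply, abs_zero]
    exact div_nonneg (mul_nonneg hL (by linarith [hy.1.2])) (sub_pos.2 hLa).le

theorem extend_mem_cube {κ : Type*} {f : κ → ι} (hf : Injective f) (hL : 0 ≤ L)
    {y : κ → ℝ} (hy : y ∈ Set.Icc (fun _ => -L) (fun _ => L)) :
    extend f y 0 ∈ Set.Icc (fun _ => -L) (fun _ => L) := by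
  rw [mem_cube_iff] at hy ⊢
  intro k
  by_cases hkf : ∃ l, f l = k
  · obtain ⟨l, rfl⟩ := hkf
    rw [hf.extend_apply]
    exact hy l
  · rwa [extend_apply' _ _ _ hkf, Pi.zero_apply, abs_zero]

theorem image_comp_cappedCube {κ : Type*} {f : κ → ι} (hf : Injective f) (hL : 0 ≤ L)
    (hLa : L < a) :
    (fun x k => x (f k)) '' cappedCube L a = (cappedCube L a : Set (κ → ℝ)) := by
  ext y
  constructor
  · rintro ⟨x, hx | hx, rfl⟩
    · exact .inl (mem_cube_iff.2 fun k => mem_cube_iff.1 hx (f k))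
    · obtain ⟨j, hj⟩ := Set.mem_iUnion.1 hx
      by_cases hjf : ∃ l, f l = j
      · obtain ⟨l, rfl⟩ := hjf
        exact .inr (Set.mem_iUnion.2 ⟨l, hj.imp (comp_mem_capSet hf) (comp_mem_capSet hf)⟩)
      · refine .inl (mem_cube_iff.2 fun k => ?_)
        have hk : f k ≠ j := fun h => hjf ⟨k, h⟩
        rcases hj with hj | hj <;> exact abs_le_of_mem_capSet hL hLa hj hk
  · rintro (hy | hy)
    · exact ⟨extend f y 0, .inl (extend_mem_cube hf hL hy), extend_comp hf y 0⟩
    · obtain ⟨j, hj⟩ := Set.mem_iUnion.1 hy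
      refine ⟨extend f y 0, .inr (Set.mem_iUnion.2 ⟨f j, ?_⟩), extend_comp hf y 0⟩
      exact hj.imp (extend_mem_capSet hf hL hLa) (extend_mem_capSet hf hL hLa)

/-- Contains both caps over the faces `x_j = ±L`; two such prisms, or a prism and the cube, meet
only where some `|x_k| = L`. -/
def facePrism (L : ℝ) (j : ι) : Set (ι → ℝ) :=
  {x | L ≤ |x j| ∧ ∀ k ≠ j, |x k| ≤ L}

theorem capSet_subset_facePrism (hL : 0 ≤ L) (hLa : L < a) (hε : |ε| = 1) (j : ι) :
    capSet L a ε j ⊆ facePrism L j := fun x hx =>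
  ⟨hx.1.1.trans ((le_abs_self _).trans_eq (by rw [abs_mul, hε, one_mul])),
    fun _ hk => abs_le_of_mem_capSet hL hLa hx hk⟩

theorem disjoint_capSet_neg_one_one (hL : 0 < L) (j : ι) :
    Disjoint (capSet L a (-1) j) (capSet L a 1 j) :=
  Set.disjoint_left.2 fun _ hneg hpos => by linarith [hneg.1.1, hpos.1.1]

theorem measurableSet_capSet [Countable ι] (L a ε : ℝ) (j : ι) :
    MeasurableSet (capSet L a ε j) := by
  simp only [capSet, Set.ofPred_and, Set.ofPred_forall]
  exact (measurableSet_Icc.preimage (by fun_prop)).inter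
    (.iInter fun k => .iInter fun _ => measurableSet_le (by fun_prop) (by fun_prop))

section Fintype

variable [Fintype ι]

theorem volume_setOf_abs_eq (j : ι) (c : ℝ) : volume {x : ι → ℝ | |x j| = c} = 0 := by
  have hfin : {t : ℝ | |t| = c}.Finite :=
    (Set.toFinite {c, -c}).subset fun _ ht => eq_or_eq_neg_of_abs_eq ht
  rw [volume_pi]
  exact Measure.pi_eval_preimage_null (fun _ : ι => (volume : Measure ℝ)) (hfin.measure_zero _)

theorem aedisjoint_facePrism {j k : ι} (hjk : j ≠ k) :
    AEDisjoint volume (facePrism L j) (facePrism L k) :=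
  measure_mono_null (fun _ hx => le_antisymm (hx.1.2 k hjk.symm) hx.2.1)
    (volume_setOf_abs_eq k L)

theorem aedisjoint_cube_facePrism (j : ι) :
    AEDisjoint volume (Set.Icc (fun _ => -L) (fun _ => L)) (facePrism L j) :=
  measure_mono_null (fun _ hx => le_antisymm (mem_cube_iff.1 hx.1 j) hx.2.1)
    (volume_setOf_abs_eq j L)

theorem volume_cappedCube_eq (hL : 0 < L) (hLa : L < a) :
    volume (cappedCube L a : Set (ι → ℝ)) =
      volume (Set.Icc (fun (_ : ι) => -L) (fun _ => L)) +
      ∑ j : ι, (volume (capSet L a (-1) j) + volume (capSet L a 1 j)) := by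
  have hprism (j : ι) : capSet L a (-1) j ∪ capSet L a 1 j ⊆ facePrism L j :=
    Set.union_subset (capSet_subset_facePrism hL.le hLa (by norm_num) j)
      (capSet_subset_facePrism hL.le hLa (by norm_num) j)
  have hmeas (j : ι) : MeasurableSet (capSet L a (-1) j ∪ capSet L a 1 j) :=
    (measurableSet_capSet _ _ _ j).union (measurableSet_capSet _ _ _ j)
  rw [cappedCube, measure_union₀ (MeasurableSet.iUnion hmeas).nullMeasurableSet
      (AEDisjoint.iUnion_right_iff.2 fun j => (aedisjoint_cube_facePrism j).mono le_rfl
        (hprism j)),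
    measure_iUnion₀ (fun j k hjk => (aedisjoint_facePrism hjk).mono (hprism j) (hprism k))
      fun j => (hmeas j).nullMeasurableSet, tsum_fintype]
  congr 1
  exact Finset.sum_congr rfl fun j _ => measure_union₀
    (measurableSet_capSet _ _ _ j).nullMeasurableSet (disjoint_capSet_neg_one_one hL j).aedisjoint

theorem volume_cube (r : ℝ) :
    volume (Set.Icc (fun (_ : ι) => -r) (fun _ => r)) =
      ENNReal.ofReal (2 * r) ^ Fintype.card ι := by
  rw [Real.volume_Icc_pi, Finset.prod_const, Finset.card_univ, sub_neg_eq_add, two_mul]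

theorem volume_capSet_eq_volume_capSet_one (hε : |ε| = 1) (j : ι) :
    volume (capSet L a ε j) = volume (capSet L a 1 j) := by
  have hpre : capSet L a ε j = (fun x => ε • x) ⁻¹' capSet L a 1 j := by
    ext x
    simp [capSet, abs_mul, hε]
  rw [hpre, Measure.addHaar_preimage_smul _ (by rintro rfl; simp at hε)]
  simp [hε]

theorem volume_prod_setOf_abs_le {A : Set ℝ} (hA : MeasurableSet A) {ρ : ℝ → ℝ}
    (hρ : Measurable ρ) :
    volume {p : ℝ × (ι → ℝ) | p.1 ∈ A ∧ ∀ k, |p.2 k| ≤ ρ p.1} =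
      ∫⁻ s in A, ENNReal.ofReal (2 * ρ s) ^ Fintype.card ι := by
  have hT : MeasurableSet {p : ℝ × (ι → ℝ) | p.1 ∈ A ∧ ∀ k, |p.2 k| ≤ ρ p.1} := by
    simp only [Set.ofPred_and, Set.ofPred_forall]
    exact (hA.preimage measurable_fst).inter
      (.iInter fun k => measurableSet_le (by fun_prop) (by fun_prop))
  rw [Measure.volume_eq_prod, Measure.prod_apply hT, ← lintegral_indicator hA]
  congr 1
  ext s
  by_cases hs : s ∈ A
  · rw [Set.indicator_of_mem hs, ← volume_cube]
    congr 1
    ext y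
    simp only [Set.mem_preimage, Set.mem_ofPred_eq, hs, true_and, mem_cube_iff]
  · simp [hs]

end Fintype

theorem setLIntegral_Icc_ofReal_mul_sub_pow {c : ℝ} (hc : 0 ≤ c) (hLa : L ≤ a) (m : ℕ) :
    ∫⁻ s in Set.Icc L a, ENNReal.ofReal (c * (a - s)) ^ m =
      ENNReal.ofReal (c ^ m * ((a - L) ^ (m + 1) / (m + 1))) := by
  have hnonneg (s : ℝ) (hs : s ∈ Set.Icc L a) : 0 ≤ c * (a - s) :=
    mul_nonneg hc (sub_nonneg.2 hs.2)
  rw [setLIntegral_congr_fun measurableSet_Icc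
      fun s hs => (ENNReal.ofReal_pow (hnonneg s hs) m).symm,
    ← ofReal_integral_eq_lintegral_ofReal (Continuous.integrableOn_Icc (by fun_prop))
      ((ae_restrict_iff' measurableSet_Icc).2
        (ae_of_all _ fun s hs => pow_nonneg (hnonneg s hs) m)),
    integral_Icc_eq_integral_Ioc, ← intervalIntegral.integral_of_le hLa]
  simp only [mul_pow]
  rw [intervalIntegral.integral_const_mul,
    intervalIntegral.integral_comp_sub_left (fun x => x ^ m), sub_self, integral_pow]
  simp

theorem capSet_one_eq_preimage {m : ℕ} (j : Fin (m + 1)) :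
    capSet L a 1 j = MeasurableEquiv.piFinSuccAbove (fun _ => ℝ) j ⁻¹'
      {p | p.1 ∈ Set.Icc L a ∧ ∀ k, |p.2 k| ≤ L * (a - p.1) / (a - L)} := by
  ext x
  simp only [capSet, one_mul, Set.mem_ofPred_eq]
  constructor
  · rintro ⟨hj, hk⟩
    exact ⟨hj, fun k => hk _ (j.succAbove_ne k)⟩
  · rintro ⟨hj, hk⟩
    refine ⟨hj, fun k hkj => ?_⟩
    obtain ⟨l, rfl⟩ := Fin.exists_succAbove_eq hkj
    exact hk l

theorem volume_capSet {m : ℕ} (hL : 0 ≤ L) (hLa : L < a) (hε : |ε| = 1) (j : Fin (m + 1)) :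
    volume (capSet L a ε j) = ENNReal.ofReal ((2 * L) ^ m * (a - L) / (m + 1)) := by
  have hmp : MeasurePreserving (MeasurableEquiv.piFinSuccAbove (fun _ => ℝ) j) volume volume :=
    measurePreserving_piFinSuccAbove (fun _ => volume) j
  rw [volume_capSet_eq_volume_capSet_one hε, capSet_one_eq_preimage, hmp.measure_preimage_equiv]
  refine (volume_prod_setOf_abs_le measurableSet_Icc (ρ := fun s => L * (a - s) / (a - L))
    (by fun_prop)).trans ?_
  have hlin (s : ℝ) : 2 * (L * (a - s) / (a - L)) = 2 * L / (a - L) * (a - s) := by ring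
  simp only [hlin, Fintype.card_fin]
  rw [setLIntegral_Icc_ofReal_mul_sub_pow (div_nonneg (by linarith) (by linarith)) hLa.le]
  congr 1
  rw [div_pow, pow_succ]
  field_simp [(sub_pos.2 hLa).ne']

theorem volume_cappedCube {m : ℕ} (hL : 0 < L) (hLa : L < a) :
    volume (cappedCube L a : Set (Fin (m + 1) → ℝ)) =
      ENNReal.ofReal (2 ^ (m + 1) * L ^ m * a) := by
  have hcap : 0 ≤ (2 * L) ^ m * (a - L) / (m + 1) := by
    have := hLa.le; positivity
  rw [volume_cappedCube_eq hL hLa, volume_cube, Fintype.card_fin,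
    ← ENNReal.ofReal_pow (by positivity)]
  simp only [volume_capSet hL.le hLa (by norm_num : |(-1 : ℝ)| = 1),
    volume_capSet hL.le hLa (by norm_num : |(1 : ℝ)| = 1), ← ENNReal.ofReal_add hcap hcap,
    Finset.sum_const, Finset.card_univ, Fintype.card_fin, nsmul_eq_mul]
  rw [← ENNReal.ofReal_natCast, ← ENNReal.ofReal_mul (by positivity),
    ← ENNReal.ofReal_add (by positivity) (by positivity)]
  congr 1
  push_cast
  field_simp
  ring

theorem geometric_volumes_general (n : ℕ) (L a : ℝ) (hL : 0 < L) (hLa : L < a)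
    (K : Set (Fin n → ℝ))
    (hK : K = Set.Icc (fun _ => -L) (fun _ => L) ∪
      ⋃ (i : Fin n) (ε : ℝ) (_ : ε = -1 ∨ ε = 1),
        convexHull ℝ ({Pi.single i (ε * a)} ∪
          {x : Fin n → ℝ | x i = ε * L ∧ ∀ k, k ≠ i → |x k| ≤ L})) :
    ∀ i (h1 : 1 ≤ i) (hi : i ≤ n),
      (volume (proj i hi K)).toReal = 2 ^ i * L ^ (i - 1) * a := by
  intro i h1 hi
  obtain ⟨m, rfl⟩ := Nat.exists_eq_add_of_le' h1
  have hK' : K = cappedCube L a := by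
    simp only [hK, cappedCube, Set.iUnion_iUnion_eq_or_left, Set.iUnion_iUnion_eq_left,
      convexHull_eq_capSet hL.le hLa (by norm_num : |(-1 : ℝ)| = 1),
      convexHull_eq_capSet hL.le hLa (by norm_num : |(1 : ℝ)| = 1)]
  rw [proj, hK', image_comp_cappedCube (Fin.castLE_injective hi) hL.le hLa,
    volume_cappedCube hL hLa, ENNReal.toReal_ofReal (mul_pos (by positivity) (hL.trans hLa)).le,
    Nat.add_sub_cancel]

/-- The cube `[-L, L]ⁿ` with a pyramidal cap (with apex `ε·a·e_i`) on each face
has geometric sequence of projection volumes `|K_i| = 2ⁱ L^{i-1} a`. -/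
theorem geometric_volumes (n : ℕ) (L a : ℝ) (hL : 0 < L) (hLa : L < a) (haL : a < 2 * L)
    (K : Set (Fin n → ℝ))
    (hK : K = Set.Icc (fun _ => -L) (fun _ => L) ∪
      ⋃ (i : Fin n) (ε : ℝ) (_ : ε = -1 ∨ ε = 1),
        convexHull ℝ ({Pi.single i (ε * a)} ∪
          {x : Fin n → ℝ | x i = ε * L ∧ ∀ k, k ≠ i → |x k| ≤ L})) :
    ∀ i (h1 : 1 ≤ i) (hi : i ≤ n),
      (volume (proj i hi K)).toReal = 2 ^ i * L ^ (i - 1) * a :=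
  geometric_volumes_general n L a hL hLa K hK
end

section
/- For every integer n ≥ 3 and real t ∈ [0,1), setting s = 1 − t ∈ (0,1], the inequality n(1 − sⁿ⁻¹)² ≥ (n−1)(n(1 − sⁿ⁻¹) − (n−1)(1 − sⁿ)) holds. -/
theorem bernoulli_reduction (n : ℕ) (hn : 3 ≤ n) (t : ℝ) (ht0 : 0 ≤ t) (ht1 : t < 1)
    (s : ℝ) (hs : s = 1 - t) :
    (n : ℝ) * (1 - s ^ (n - 1)) ^ 2 ≥
      ((n : ℝ) - 1) * ((n : ℝ) * (1 - s ^ (n - 1)) - ((n : ℝ) - 1) * (1 - s ^ n)) := by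
  have hs0 : 0 < s := by rw [hs]; linarith
  have hs1 : s ≤ 1 := by rw [hs]; linarith
  have hcast : ((n - 1 : ℕ) : ℝ) = (n : ℝ) - 1 := by
    rw [Nat.cast_sub (by omega)]; simp
  have hB : 1 + ((n : ℝ) - 1) * (-t) ≤ s ^ (n - 1) := by
    have := one_add_mul_le_pow (a := -t) (by linarith) (n - 1)
    rw [hcast] at this
    rw [hs]
    rw [sub_eq_add_neg 1 t]; exact this
  have hx1 : s ^ (n - 1) ≤ 1 := pow_le_one₀ hs0.le hs1
  have hx0 : 0 ≤ s ^ (n - 1) := pow_nonneg hs0.le _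
  have hsn : s ^ n = s ^ (n - 1) * s := by
    rw [← pow_succ]; congr 1; omega
  have hn3 : (3 : ℝ) ≤ (n : ℝ) := by exact_mod_cast hn
  rw [hsn]
  set x := s ^ (n - 1) with hx
  clear_value x
  rw [hs]
  nlinarith [mul_nonneg (mul_nonneg (by nlinarith : (0:ℝ) ≤ ((n:ℝ)-1)*t - (1 - x))
      (by linarith : (0:ℝ) ≤ x)) (by linarith : (0:ℝ) ≤ (n:ℝ)-1),
    sq_nonneg (1 - x)]
end

section
/- Let K be an unconditional, permutationally invariant convex body in ℝⁿ, n ≥ 3, with projections K_i and define F as the normalized decreasing slice-volume function supported on [0, L] as in the proof of the main theorem. Then ∫₀ᴸ F(x) dx = (1/(2(n−1)))·|K_{n-1}|/|K_{n-2}| and ∫₀ᴸ x·F(x) dx ≥ (1/(4n(n−1)))·|K_n|/|K_{n-2}|. -/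
open MeasureTheory intervalIntegral

/-!
Signed permutations of the coordinates preserve Lebesgue measure; the sign changes have the
orthant `x ≥ 0` as a fundamental domain and the permutations the cone of decreasing vectors.
Hence an unconditional, permutation-invariant `S ⊆ ℝᵏ` satisfies `|S| = 2ᵏ k! |S ∩ C|`
with `C = {x₀ ≥ x₁ ≥ ⋯ ≥ 0}`.

By convexity and unconditionality the section of `K_{n-1}` at last coordinate `0` is `K_{n-2}`,
so the denominator of `F` is `|K_{n-2} ∩ C|`, while for `x ≥ 0` its numerator is the slice of
`K_{n-1} ∩ C` at last coordinate `x`; Cavalieri gives `∫ F = |K_{n-1} ∩ C| / |K_{n-2} ∩ C|`.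
Slicing `K ∩ C` at penultimate coordinate `x` instead, each slice lies in
(slice of `K_{n-1} ∩ C` at `x`) × `[0, x]`, whence
`∫ x F(x) dx ≥ |K ∩ C| / |K_{n-2} ∩ C|`.
The constants are ratios of the numbers `2ᵏ k!`.
-/

open Set Equiv
open scoped ENNReal Pointwise

section Hyperoctahedral

variable {ι : Type*}

lemma units_int_smul_apply (g : ι → ℤˣ) (x : ι → ℝ) (i : ι) :
    (g • x) i = ((g i : ℤ) : ℝ) * x i := by
  simp [Units.smul_def]

lemma domMulAct_perm_smul_apply (g : (Perm ι)ᵈᵐᵃ) (x : ι → ℝ) (i : ι) :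
    (g • x) i = x (DomMulAct.mk.symm g i) := by
  simp [DomMulAct.smul_apply]

variable [Fintype ι]

lemma measurePreserving_units_int_smul (g : ι → ℤˣ) :
    MeasurePreserving (g • · : (ι → ℝ) → ι → ℝ) volume volume := by
  have hcoord (u : ℤˣ) :
      MeasurePreserving (((u : ℤ) : ℝ) * · : ℝ → ℝ) volume volume := by
    rcases Int.units_eq_one_or u with rfl | rfl
    · simp only [Units.val_one, Int.cast_one, one_mul]
      exact MeasurePreserving.id _
    · simpa using Measure.measurePreserving_neg (volume : Measure ℝ)
  convert volume_preserving_pi fun i => hcoord (g i) with x i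
  · rfl
  · rfl
  · exact units_int_smul_apply g x i

lemma measurePreserving_domMulAct_perm_smul (g : (Perm ι)ᵈᵐᵃ) :
    MeasurePreserving (g • · : (ι → ℝ) → ι → ℝ) volume volume := by
  convert volume_measurePreserving_piCongrLeft (fun _ : ι => ℝ) (DomMulAct.mk.symm g).symm
    using 1
  ext x i
  rw [domMulAct_perm_smul_apply]
  simp [MeasurableEquiv.piCongrLeft, Equiv.piCongrLeft_apply]

instance : MeasurableConstSMul (ι → ℤˣ) (ι → ℝ) :=
  ⟨fun g => (measurePreserving_units_int_smul g).measurable⟩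

instance : SMulInvariantMeasure (ι → ℤˣ) (ι → ℝ) volume :=
  ⟨fun g _ hs => (measurePreserving_units_int_smul g).measure_preimage hs.nullMeasurableSet⟩

instance : MeasurableConstSMul (Perm ι)ᵈᵐᵃ (ι → ℝ) :=
  ⟨fun g => (measurePreserving_domMulAct_perm_smul g).measurable⟩

instance : SMulInvariantMeasure (Perm ι)ᵈᵐᵃ (ι → ℝ) volume :=
  ⟨fun g _ hs =>
    (measurePreserving_domMulAct_perm_smul g).measure_preimage hs.nullMeasurableSet⟩

instance {M : Type*} [Finite M] : Finite Mᵈᵐᵃ := .of_equiv M DomMulAct.mk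

end Hyperoctahedral

section FundamentalDomains

variable {ι : Type*} [Fintype ι]

lemma volume_ker_eq_zero {f : (ι → ℝ) →ₗ[ℝ] ℝ} (hf : f ≠ 0) :
    volume (LinearMap.ker f : Set (ι → ℝ)) = 0 :=
  Measure.addHaar_submodule _ _ (mt LinearMap.ker_eq_top.mp hf)

lemma volume_setOf_apply_eq_zero (i : ι) : volume {x : ι → ℝ | x i = 0} = 0 := by
  classical
  refine volume_ker_eq_zero (f := LinearMap.proj (R := ℝ) (φ := fun _ : ι => ℝ) i) fun h => ?_
  simpa using LinearMap.congr_fun h (Pi.single i 1)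

lemma volume_setOf_apply_eq_apply {i j : ι} (hij : i ≠ j) :
    volume {x : ι → ℝ | x i = x j} = 0 := by
  classical
  have := volume_ker_eq_zero
    (f := LinearMap.proj (R := ℝ) (φ := fun _ : ι => ℝ) i - LinearMap.proj j) fun h => by
      simpa [hij.symm] using LinearMap.congr_fun h (Pi.single i 1)
  convert this using 2
  ext x
  simp [sub_eq_zero]

theorem isFundamentalDomain_Ici_zero :
    IsFundamentalDomain (ι → ℤˣ) (Ici (0 : ι → ℝ)) := by
  classical
  refine .mk'' measurableSet_Ici.nullMeasurableSet (ae_of_all _ fun x => ?_) (fun g hg => ?_)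
    fun g => (measurePreserving_smul g volume).quasiMeasurePreserving
  · refine ⟨fun i => if 0 ≤ x i then 1 else -1, fun i => ?_⟩
    rw [units_int_smul_apply]
    split_ifs with h <;> simp <;> linarith
  · obtain ⟨i, hi⟩ : ∃ i, g i = -1 := by
      by_contra! h
      exact hg (funext fun i => (Int.units_eq_one_or (g i)).resolve_right (h i))
    refine measure_mono_null ?_ (volume_setOf_apply_eq_zero i)
    rintro _ ⟨⟨x, hx, rfl⟩, hgx⟩
    have h1 : 0 ≤ x i := hx i
    have h2 : 0 ≤ (g • x) i := hgx i
    show (g • x) i = 0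
    rw [units_int_smul_apply, hi] at h2 ⊢
    norm_num at h2 ⊢
    linarith

theorem isFundamentalDomain_antitone (k : ℕ) :
    IsFundamentalDomain (Perm (Fin k))ᵈᵐᵃ {x : Fin k → ℝ | Antitone x} := by
  refine .mk'' isClosed_antitone.measurableSet.nullMeasurableSet (ae_of_all _ fun x => ?_)
    (fun g hg => ?_) fun g => (measurePreserving_smul g volume).quasiMeasurePreserving
  · refine ⟨DomMulAct.mk (Tuple.sort (OrderDual.toDual ∘ x)), ?_⟩
    have := Tuple.monotone_sort (OrderDual.toDual ∘ x)
    intro i j hij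
    simpa [domMulAct_perm_smul_apply] using this hij
  · refine measure_mono_null (t := ⋃ (i) (j) (_ : i ≠ j), {x : Fin k → ℝ | x i = x j}) ?_
      (measure_iUnion_null fun i => measure_iUnion_null fun j =>
        measure_iUnion_null fun hij => volume_setOf_apply_eq_apply hij)
    rintro x ⟨hgx, hx⟩
    by_contra hinj
    simp only [mem_iUnion, not_exists] at hinj
    have hinj : Function.Injective x := fun i j h => by_contra fun hij => hinj i j hij h
    rw [mem_smul_set_iff_inv_smul_mem] at hgx
    apply hg
    have hsorted : x ∘ (DomMulAct.mk.symm g⁻¹ : Perm (Fin k)) = x ∘ (1 : Perm (Fin k)) :=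
      Tuple.unique_antitone (fun i j hij => by simpa [domMulAct_perm_smul_apply] using hgx hij) hx
    have hg1 : DomMulAct.mk.symm g = 1 := by
      simpa using DFunLike.coe_injective (hinj.comp_left hsorted)
    exact DomMulAct.mk.symm.injective hg1

end FundamentalDomains

section Counting

variable {ι : Type*}

def IsUnconditional (S : Set (ι → ℝ)) : Prop :=
  ∀ x ∈ S, ∀ ε : ι → ℝ, (∀ i, ε i = 1 ∨ ε i = -1) → (fun i => ε i * x i) ∈ S

def IsPermInvariant (S : Set (ι → ℝ)) : Prop :=
  ∀ x ∈ S, ∀ π : Perm ι, (fun i => x (π i)) ∈ S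

lemma smul_set_eq_of_forall_smul_set_subset {G α : Type*} [Group G] [MulAction G α]
    {s : Set α} (h : ∀ g : G, g • s ⊆ s) (g : G) : g • s = s :=
  (h g).antisymm (subset_smul_set_iff.mpr (h g⁻¹))

lemma IsUnconditional.smul_set_eq {S : Set (ι → ℝ)} (hS : IsUnconditional S)
    (g : ι → ℤˣ) : g • S = S := by
  refine smul_set_eq_of_forall_smul_set_subset (fun g => ?_) g
  rintro _ ⟨x, hx, rfl⟩
  show g • x ∈ S
  rw [show g • x = _ from funext (units_int_smul_apply g x)]
  exact hS x hx _ fun i => by rcases Int.units_eq_one_or (g i) with h | h <;> simp [h]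

lemma IsPermInvariant.smul_set_eq {S : Set (ι → ℝ)} (hS : IsPermInvariant S)
    (g : (Perm ι)ᵈᵐᵃ) : g • S = S := by
  refine smul_set_eq_of_forall_smul_set_subset (fun g => ?_) g
  rintro _ ⟨x, hx, rfl⟩
  show g • x ∈ S
  rw [show g • x = _ from funext (domMulAct_perm_smul_apply g x)]
  exact hS x hx (DomMulAct.mk.symm g)

lemma isPermInvariant_Ici_zero : IsPermInvariant (Ici (0 : ι → ℝ)) :=
  fun _ hx π i => hx (π i)

/-- The fundamental Weyl chamber `x₀ ≥ x₁ ≥ ⋯ ≥ 0` of the hyperoctahedral group. -/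
def chamber (k : ℕ) : Set (Fin k → ℝ) := {x | Antitone x} ∩ Ici 0

lemma isClosed_chamber (k : ℕ) : IsClosed (chamber k) :=
  isClosed_antitone.inter isClosed_Ici

theorem IsUnconditional.volume_eq_mul_volume_inter_chamber {k : ℕ} {S : Set (Fin k → ℝ)}
    (hu : IsUnconditional S) (hp : IsPermInvariant S) :
    volume S = (2 ^ k * k.factorial : ℕ) * volume (S ∩ chamber k) := by
  have hsign := isFundamentalDomain_Ici_zero.measure_eq_card_smul_of_smul_ae_eq_self S
    fun g => .of_eq (hu.smul_set_eq g)
  have hperm := (isFundamentalDomain_antitone k).measure_eq_card_smul_of_smul_ae_eq_self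
    (S ∩ Ici 0) fun g => .of_eq <| by
      rw [smul_set_inter, hp.smul_set_eq g, isPermInvariant_Ici_zero.smul_set_eq g]
  rw [hsign, hperm, chamber, inter_comm {x | Antitone x}, ← inter_assoc, smul_smul,
    nsmul_eq_mul]
  simp [Nat.card_congr DomMulAct.mk.symm, Fintype.card_perm]

theorem IsUnconditional.toReal_volume_eq_mul {k : ℕ} {S : Set (Fin k → ℝ)}
    (hu : IsUnconditional S) (hp : IsPermInvariant S) :
    (volume S).toReal = 2 ^ k * k.factorial * (volume (S ∩ chamber k)).toReal := by
  simp [hu.volume_eq_mul_volume_inter_chamber hp, ENNReal.toReal_mul]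

end Counting

section Projection

variable {n i : ℕ} {K : Set (Fin n → ℝ)}

lemma IsCompact.proj (h : i ≤ n) (hK : IsCompact K) : IsCompact (proj i h K) :=
  hK.image (continuous_pi fun _ => continuous_apply _)

lemma Convex.proj (h : i ≤ n) (hK : Convex ℝ K) : Convex ℝ (proj i h K) :=
  hK.linear_image (LinearMap.funLeft ℝ ℝ (Fin.castLE h))

lemma IsUnconditional.proj (h : i ≤ n) (hK : IsUnconditional K) :
    IsUnconditional (proj i h K) := by
  classical
  rintro _ ⟨z, hz, rfl⟩ ε hε
  refine ⟨_, hK z hz (fun l => if hl : (l : ℕ) < i then ε ⟨l, hl⟩ else 1) ?_, ?_⟩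
  · intro l
    split_ifs with hl
    exacts [hε _, .inl rfl]
  · ext j
    simp [j.isLt]

lemma IsPermInvariant.proj (h : i ≤ n) (hK : IsPermInvariant K) :
    IsPermInvariant (proj i h K) := by
  rintro _ ⟨z, hz, rfl⟩ π
  refine ⟨_, hK z hz (π.viaFintypeEmbedding (Fin.castLEEmb h)), funext fun j => ?_⟩
  simpa using congrArg z (π.viaFintypeEmbedding_apply_image (Fin.castLEEmb h) j)

lemma image_init_proj (h : i + 1 ≤ n) :
    Fin.init '' proj (i + 1) h K = proj i (by omega) K := by
  rw [proj, proj, image_image]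
  rfl

lemma mapsTo_init_proj {K : Set (Fin (i + 1) → ℝ)} (h : i ≤ i + 1) :
    MapsTo Fin.init K (proj i h K) :=
  fun z hz => ⟨z, hz, rfl⟩

lemma setOf_snoc_zero_mem_eq_image_init {k : ℕ} {S : Set (Fin (k + 1) → ℝ)}
    (hconv : Convex ℝ S) (hu : IsUnconditional S) :
    {y : Fin k → ℝ | Fin.snoc y 0 ∈ S} = Fin.init '' S := by
  refine subset_antisymm (fun y hy => ⟨_, hy, Fin.init_snoc _ _⟩) ?_
  rintro _ ⟨z, hz, rfl⟩
  classical
  have hflip := hu z hz (fun l => if l = Fin.last k then -1 else 1) fun l => by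
    split_ifs <;> simp
  show Fin.snoc (Fin.init z) 0 ∈ S
  convert hconv hz hflip (a := 1 / 2) (b := 1 / 2) (by norm_num) (by norm_num) (by norm_num)
    using 1
  ext l
  induction l using Fin.lastCases
  · simp
  · simp [Fin.init, (Fin.castSucc_lt_last _).ne]
    ring

end Projection

section Slicing

variable {k : ℕ}

lemma volume_eq_lintegral_volume_insertNth (i : Fin (k + 1)) {A : Set (Fin (k + 1) → ℝ)}
    (hA : MeasurableSet A) :
    volume A = ∫⁻ x, volume {u : Fin k → ℝ | i.insertNth x u ∈ A} := by
  have he := volume_preserving_piFinSuccAbove (fun _ : Fin (k + 1) => ℝ) i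
  rw [← he.symm.measure_preimage hA.nullMeasurableSet, Measure.volume_eq_prod,
    Measure.prod_apply (MeasurableEquiv.measurable _ hA)]
  rfl

lemma measurable_volume_insertNth (i : Fin (k + 1)) {A : Set (Fin (k + 1) → ℝ)}
    (hA : MeasurableSet A) :
    Measurable fun x => volume {u : Fin k → ℝ | i.insertNth x u ∈ A} :=
  measurable_measure_prodMk_left (ν := volume)
    ((MeasurableEquiv.piFinSuccAbove (fun _ : Fin (k + 1) => ℝ) i).symm.measurable hA)

lemma volume_setOf_init_mem_and_last_mem (A : Set (Fin k → ℝ)) (I : Set ℝ) :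
    volume {u : Fin (k + 1) → ℝ | Fin.init u ∈ A ∧ u (Fin.last k) ∈ I} =
      volume A * volume I := by
  have he := volume_preserving_piFinSuccAbove (fun _ : Fin (k + 1) => ℝ) (Fin.last k)
  rw [mul_comm, ← Measure.prod_prod, ← Measure.volume_eq_prod, ← he.measure_preimage_equiv]
  congr 1
  ext u
  simp [MeasurableEquiv.piFinSuccAbove_apply, and_comm]

lemma antitone_snoc_iff {y : Fin k → ℝ} {x : ℝ} :
    Antitone (Fin.snoc y x : Fin (k + 1) → ℝ) ↔ Antitone y ∧ ∀ j, x ≤ y j := by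
  refine ⟨fun h => ⟨fun i j hij => ?_, fun j => ?_⟩, fun ⟨hy, hx⟩ i j hij => ?_⟩
  · simpa using h (Fin.castSucc_le_castSucc_iff.mpr hij)
  · simpa using h (Fin.le_last j.castSucc)
  · induction j using Fin.lastCases with
    | last =>
      induction i using Fin.lastCases with
      | last => rfl
      | cast i => simpa using hx i
    | cast j =>
      induction i using Fin.lastCases with
      | last => exact absurd hij (Fin.castSucc_lt_last j).not_ge
      | cast i => simpa using hy (Fin.castSucc_le_castSucc_iff.mp hij)

lemma snoc_mem_chamber_iff {y : Fin k → ℝ} {x : ℝ} :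
    (Fin.snoc y x : Fin (k + 1) → ℝ) ∈ chamber (k + 1) ↔
      Antitone y ∧ (∀ j, x ≤ y j) ∧ 0 ≤ x := by
  show Antitone _ ∧ _ ↔ _
  rw [antitone_snoc_iff, and_assoc]
  refine and_congr_right fun _ => and_congr_right fun hx =>
    ⟨fun h => by simpa using h (Fin.last k), fun h i => ?_⟩
  induction i using Fin.lastCases
  · simpa using h
  · simpa using h.trans (hx _)

lemma insertNth_castSucc_last (x : ℝ) (u : Fin (k + 1) → ℝ) :
    (Fin.last k).castSucc.insertNth x u =
      (Fin.snoc (Fin.snoc (Fin.init u) x : Fin (k + 1) → ℝ) (u (Fin.last k)) :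
        Fin (k + 2) → ℝ) := by
  ext j
  induction j using Fin.lastCases with
  | last =>
    rw [← Fin.succ_last, ← Fin.succAbove_castSucc_self, Fin.insertNth_apply_succAbove]
    simp
  | cast j =>
    induction j using Fin.lastCases with
    | last => simp
    | cast j =>
      rw [← Fin.succAbove_castSucc_of_lt _ _ (Fin.castSucc_lt_last j),
        Fin.insertNth_apply_succAbove]
      simp [Fin.init]

end Slicing

section SliceVolume

variable {k : ℕ}

noncomputable def antitoneSliceVolume (P : Set (Fin (k + 1) → ℝ)) (x : ℝ) : ℝ≥0∞ :=
  volume {y : Fin k → ℝ | Antitone y ∧ (∀ j, x ≤ y j) ∧ Fin.snoc y x ∈ P}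

lemma antitoneSliceVolume_eq (P : Set (Fin (k + 1) → ℝ)) (x : ℝ) :
    antitoneSliceVolume P x =
      volume {y : Fin k → ℝ | (Fin.last k).insertNth x y ∈ {z | Antitone z} ∩ P} := by
  simp only [antitoneSliceVolume, Fin.insertNth_last', mem_inter_iff, mem_ofPred_eq,
    antitone_snoc_iff, and_assoc]

lemma measurable_antitoneSliceVolume {P : Set (Fin (k + 1) → ℝ)} (hP : MeasurableSet P) :
    Measurable (antitoneSliceVolume P) := by
  rw [funext (antitoneSliceVolume_eq P)]
  exact measurable_volume_insertNth _ (isClosed_antitone.measurableSet.inter hP)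

lemma antitoneSliceVolume_zero {P : Set (Fin (k + 1) → ℝ)} (hconv : Convex ℝ P)
    (hu : IsUnconditional P) :
    antitoneSliceVolume P 0 = volume (Fin.init '' P ∩ chamber k) := by
  rw [antitoneSliceVolume, ← setOf_snoc_zero_mem_eq_image_init hconv hu]
  congr 1
  ext y
  exact ⟨fun ⟨h1, h2, h3⟩ => ⟨h3, h1, h2⟩, fun ⟨h3, h1, h2⟩ => ⟨h1, h2, h3⟩⟩

lemma continuous_init : Continuous (Fin.init : (Fin (k + 1) → ℝ) → Fin k → ℝ) :=
  continuous_pi fun _ => continuous_apply _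

lemma antitoneSliceVolume_le (P : Set (Fin (k + 1) → ℝ)) (x : ℝ) :
    antitoneSliceVolume P x ≤ volume (Fin.init '' P) :=
  measure_mono fun _ hy => ⟨_, hy.2.2, Fin.init_snoc _ _⟩

lemma antitoneSliceVolume_lt_top {P : Set (Fin (k + 1) → ℝ)} (hP : IsCompact P) (x : ℝ) :
    antitoneSliceVolume P x < ∞ :=
  (antitoneSliceVolume_le P x).trans_lt (hP.image continuous_init).measure_lt_top

lemma volume_inter_chamber_eq_setLIntegral {P : Set (Fin (k + 1) → ℝ)}
    (hP : MeasurableSet P) :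
    volume (P ∩ chamber (k + 1)) = ∫⁻ x in Ici 0, antitoneSliceVolume P x := by
  rw [volume_eq_lintegral_volume_insertNth (Fin.last k)
    (hP.inter (isClosed_chamber _).measurableSet), ← lintegral_indicator measurableSet_Ici]
  refine lintegral_congr fun x => ?_
  simp only [Fin.insertNth_last', mem_inter_iff, snoc_mem_chamber_iff]
  by_cases hx : 0 ≤ x
  · rw [indicator_of_mem (mem_Ici.mpr hx), antitoneSliceVolume]
    congr 1
    ext y
    simp only [mem_ofPred_eq, hx]
    tauto
  · simp [hx]

lemma volume_inter_chamber_le_lintegral {K : Set (Fin (k + 2) → ℝ)}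
    {P : Set (Fin (k + 1) → ℝ)} (hK : MeasurableSet K) (hKP : MapsTo Fin.init K P) :
    volume (K ∩ chamber (k + 2)) ≤ ∫⁻ x, ENNReal.ofReal x * antitoneSliceVolume P x := by
  rw [volume_eq_lintegral_volume_insertNth (Fin.last k).castSucc
    (hK.inter (isClosed_chamber _).measurableSet)]
  refine lintegral_mono fun x => ?_
  calc volume {u | (Fin.last k).castSucc.insertNth x u ∈ K ∩ chamber (k + 2)}
      ≤ volume {u : Fin (k + 1) → ℝ |
          Fin.init u ∈ {y | Antitone y ∧ (∀ j, x ≤ y j) ∧ Fin.snoc y x ∈ P} ∧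
            u (Fin.last k) ∈ Icc 0 x} := by
        refine measure_mono fun u hu => ?_
        simp only [mem_ofPred_eq, insertNth_castSucc_last, mem_inter_iff] at hu ⊢
        obtain ⟨hK', hch⟩ := hu
        rw [snoc_mem_chamber_iff, antitone_snoc_iff] at hch
        obtain ⟨⟨hanti, hx⟩, hlast, h0⟩ := hch
        refine ⟨⟨hanti, hx, by simpa using hKP hK'⟩, h0, by simpa using hlast (Fin.last k)⟩
    _ = ENNReal.ofReal x * antitoneSliceVolume P x := by
        rw [volume_setOf_init_mem_and_last_mem, Real.volume_Icc, sub_zero, mul_comm]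
        rfl

end SliceVolume

section Integrals

variable {k : ℕ} {L : ℝ}

lemma setLIntegral_Ici_eq_setLIntegral_Ioc {f : ℝ → ℝ≥0∞} {a : ℝ} (haL : a ≤ L)
    (hf : ∀ x, L < x → f x = 0) : ∫⁻ x in Ici a, f x = ∫⁻ x in Ioc a L, f x := by
  rw [← Icc_union_Ioi_eq_Ici haL, lintegral_union measurableSet_Ioi
      ((Iic_disjoint_Ioi le_rfl).mono_left Icc_subset_Iic_self),
    setLIntegral_congr_fun measurableSet_Ioi hf, lintegral_zero, add_zero,
    setLIntegral_congr Ioc_ae_eq_Icc]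

theorem intervalIntegral_antitoneSliceVolume {P : Set (Fin (k + 1) → ℝ)} (hP : IsCompact P)
    (hL0 : 0 ≤ L) (hL : ∀ x, L < x → antitoneSliceVolume P x = 0) :
    ∫ x in 0..L, (antitoneSliceVolume P x).toReal = (volume (P ∩ chamber (k + 1))).toReal := by
  rw [intervalIntegral.integral_of_le hL0, integral_toReal
    (measurable_antitoneSliceVolume hP.measurableSet).aemeasurable
    (ae_of_all _ (antitoneSliceVolume_lt_top hP)), volume_inter_chamber_eq_setLIntegral
    hP.measurableSet, setLIntegral_Ici_eq_setLIntegral_Ioc hL0 hL]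

theorem toReal_volume_inter_chamber_le_intervalIntegral {K : Set (Fin (k + 2) → ℝ)}
    {P : Set (Fin (k + 1) → ℝ)} (hK : IsCompact K) (hKP : MapsTo Fin.init K P)
    (hP : IsCompact P) (hL0 : 0 ≤ L) (hL : ∀ x, L < x → antitoneSliceVolume P x = 0) :
    (volume (K ∩ chamber (k + 2))).toReal ≤
      ∫ x in 0..L, x * (antitoneSliceVolume P x).toReal := by
  set f := fun x => ENNReal.ofReal x * antitoneSliceVolume P x
  have hf : Measurable f :=
    ENNReal.measurable_ofReal.mul (measurable_antitoneSliceVolume hP.measurableSet)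
  have hrestrict : ∫⁻ x, f x = ∫⁻ x in Ioc 0 L, f x := by
    rw [← setLIntegral_eq_of_support_subset (s := Ici 0),
      setLIntegral_Ici_eq_setLIntegral_Ioc hL0]
    · exact fun x hx => by simp [f, hL x hx]
    · intro x hx
      by_contra h
      simp [f, ENNReal.ofReal_of_nonpos (not_le.mp h).le] at hx
  have hfin : ∫⁻ x in Ioc 0 L, f x ≠ ∞ := by
    refine ((setLIntegral_mono' measurableSet_Ioc fun x hx => mul_le_mul'
      (ENNReal.ofReal_le_ofReal hx.2) (antitoneSliceVolume_le P x)).trans_lt ?_).ne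
    rw [setLIntegral_const]
    exact ENNReal.mul_lt_top (ENNReal.mul_lt_top ENNReal.ofReal_lt_top
      (hP.image continuous_init).measure_lt_top) measure_Ioc_lt_top
  have hint : ∫ x in 0..L, x * (antitoneSliceVolume P x).toReal =
      (∫⁻ x in Ioc 0 L, f x).toReal := by
    rw [intervalIntegral.integral_of_le hL0, ← integral_toReal hf.aemeasurable]
    · refine setIntegral_congr_fun measurableSet_Ioc fun x hx => ?_
      simp [f, ENNReal.toReal_ofReal hx.1.le]
    · exact ae_of_all _ fun x => ENNReal.mul_lt_top ENNReal.ofReal_lt_top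
        (antitoneSliceVolume_lt_top hP x)
  rw [hint, ← hrestrict]
  exact ENNReal.toReal_mono (hrestrict ▸ hfin)
    (volume_inter_chamber_le_lintegral hK.measurableSet hKP)

end Integrals

/-- Here `n = m + 3 ≥ 3`.  `F` is the normalized decreasing slice-volume function
of the proof of the main theorem, supported on `[0, L]`; the total mass of `F`
equals `(1/(2(n-1)))·|K_{n-1}|/|K_{n-2}|` and its first moment is at least
`(1/(4n(n-1)))·|K_n|/|K_{n-2}|`. -/
theorem F_integrals (m : ℕ) (K : Set (Fin (m + 3) → ℝ))
    (hK_compact : IsCompact K) (hK_conv : Convex ℝ K)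
    (hK_uncond : ∀ x ∈ K, ∀ ε : Fin (m + 3) → ℝ, (∀ i, ε i = 1 ∨ ε i = -1) →
      (fun i => ε i * x i) ∈ K)
    (hK_perm : ∀ x ∈ K, ∀ π : Equiv.Perm (Fin (m + 3)), (fun i => x (π i)) ∈ K)
    (F : ℝ → ℝ)
    (hF : F = fun x : ℝ =>
      (volume {y : Fin (m + 1) → ℝ | Antitone y ∧ (∀ j, x ≤ y j) ∧
          Fin.snoc y x ∈ proj (m + 2) (by omega) K}).toReal /
      (volume {y : Fin (m + 1) → ℝ | Antitone y ∧ (∀ j, (0:ℝ) ≤ y j) ∧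
          Fin.snoc y (0:ℝ) ∈ proj (m + 2) (by omega) K}).toReal)
    (L : ℝ) (hL0 : 0 ≤ L) (hsupp : ∀ x, L < x → F x = 0) :
    (∫ x in (0:ℝ)..L, F x) =
        1 / (2 * ((m : ℝ) + 2)) *
          ((volume (proj (m + 2) (by omega) K)).toReal /
            (volume (proj (m + 1) (by omega) K)).toReal) ∧
      (∫ x in (0:ℝ)..L, x * F x) ≥
        1 / (4 * ((m : ℝ) + 3) * ((m : ℝ) + 2)) *
          ((volume K).toReal / (volume (proj (m + 1) (by omega) K)).toReal) := by
  have hKu : IsUnconditional K := hK_uncond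
  have hKp : IsPermInvariant K := hK_perm
  set P := proj (m + 2) (by omega) K
  set Q := proj (m + 1) (by omega) K
  have hP : IsCompact P := hK_compact.proj _
  have hPu : IsUnconditional P := hKu.proj _
  have hd : antitoneSliceVolume P 0 = volume (Q ∩ chamber (m + 1)) := by
    rw [antitoneSliceVolume_zero (hK_conv.proj _) hPu, image_init_proj]
  set d := volume (Q ∩ chamber (m + 1))
  replace hF : F = fun x => (antitoneSliceVolume P x).toReal / d.toReal :=
    hF.trans (by rw [← hd]; rfl)
  have hQ : (volume Q).toReal = 2 ^ (m + 1) * (m + 1).factorial * d.toReal :=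
    (hKu.proj _).toReal_volume_eq_mul (hKp.proj _)
  rcases eq_or_ne d.toReal 0 with hd0 | hd0
  -- then `F = 0` and `|K_{n-2}| = 0`, so both sides vanish by division by zero
  · simp [hF, hd0, hQ]
  have hL (x : ℝ) (hx : L < x) : antitoneSliceVolume P x = 0 := by
    simpa [hF, hd0, ENNReal.toReal_eq_zero_iff, (antitoneSliceVolume_lt_top hP x).ne]
      using hsupp x hx
  refine ⟨?_, ?_⟩
  · rw [hF, intervalIntegral.integral_div, intervalIntegral_antitoneSliceVolume hP hL0 hL,
      hPu.toReal_volume_eq_mul (hKp.proj _), hQ]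
    field_simp
    push_cast [Nat.factorial_succ]
    ring
  · simp_rw [hF, mul_div_assoc']
    rw [intervalIntegral.integral_div, hKu.toReal_volume_eq_mul hKp, hQ, ge_iff_le]
    calc _ = (volume (K ∩ chamber (m + 3))).toReal / d.toReal := by
          field_simp
          push_cast [Nat.factorial_succ]
          ring
      _ ≤ _ := div_le_div_of_nonneg_right (toReal_volume_inter_chamber_le_intervalIntegral
          hK_compact (mapsTo_init_proj _) hP hL0 hL) ENNReal.toReal_nonneg
end
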